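/- If η.P ∼ Q‖Q' in microCCS with Q ≁ 0 and Q' ≁ 0, then there exist a process A and an integer k > 1 such that η.P ∼ (η.A)^k and η.A is in normal form with respect to the distribution-law rewriting. -/

import Mathlib

/-- CCS visible actions: a name `a` or a coname `ā`. -/
inductive Act where
  | inp : ℕ → Act
  | out : ℕ → Act
deriving DecidableEq

/-- The coaction. -/
def Act.co : Act → Act
  | .inp a => .out a
  | .out a => .inp a

/-- MicroCCS processes: nil, prefix, parallel composition. -/
inductive Proc where
  | nil : Proc
  | pre : Act → Proc → Proc
  | par : Proc → Proc → Proc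
deriving DecidableEq

/-- Transition labels: a visible action or τ. -/
inductive Lab where
  | act : Act → Lab
  | tau : Lab
deriving DecidableEq

/-- The standard CCS labelled transition system on microCCS. -/
inductive Step : Proc → Lab → Proc → Prop where
  | pre (η : Act) (P : Proc) : Step (.pre η P) (.act η) P
  | syn {P P' Q Q' : Proc} {η : Act} :
      Step P (.act η) P' → Step Q (.act η.co) Q' →
      Step (.par P Q) .tau (.par P' Q')
  | parL {P P' : Proc} {μ : Lab} (Q : Proc) :
      Step P μ P' → Step (.par P Q) μ (.par P' Q)
  | parR {Q Q' : Proc} {μ : Lab} (P : Proc) :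
      Step Q μ Q' → Step (.par P Q) μ (.par P Q')

/-- A (symmetric) bisimulation. -/
def IsBisim (R : Proc → Proc → Prop) : Prop :=
  (∀ P Q, R P Q → R Q P) ∧
  ∀ P Q μ P', R P Q → Step P μ P' → ∃ Q', Step Q μ Q' ∧ R P' Q'

/-- Strong bisimilarity: the union of all bisimulations. -/
def Bisim (P Q : Proc) : Prop := ∃ R, IsBisim R ∧ R P Q

/-- The size of a process: its number of prefixes. -/
def Proc.size : Proc → ℕ
  | .nil => 0
  | .pre _ P => 1 + P.size
  | .par P Q => P.size + Q.size

/-- Structural congruence: abelian monoid laws for parallel composition. -/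
inductive SC : Proc → Proc → Prop where
  | refl (P) : SC P P
  | symm : SC P Q → SC Q P
  | trans : SC P Q → SC Q R → SC P R
  | comm (P Q) : SC (.par P Q) (.par Q P)
  | assoc (P Q R) : SC (.par P (.par Q R)) (.par (.par P Q) R)
  | unit (P) : SC (.par P .nil) P
  | pre (η) : SC P Q → SC (.pre η P) (.pre η Q)
  | par : SC P P' → SC Q Q' → SC (.par P Q) (.par P' Q')

/-- `pow P k` is the k-fold parallel composition of `P`. -/
def pow (P : Proc) : ℕ → Proc
  | 0 => .nil
  | n+1 => .par P (pow P n)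

/-- One step of rewriting with the distribution law
    `η.(P ‖ (η.P)^k) ⇝ (η.P)^{k+1}` (k ≥ 1), modulo structural
    congruence, in any context. -/
inductive RW : Proc → Proc → Prop where
  | head {η : Act} {P : Proc} {k : ℕ} (hk : 1 ≤ k) :
      RW (.pre η (.par P (pow (.pre η P) k))) (pow (.pre η P) (k+1))
  | pre (η) : RW P P' → RW (.pre η P) (.pre η P')
  | parL (Q) : RW P P' → RW (.par P Q) (.par P' Q)
  | parR (P) : RW Q Q' → RW (.par P Q) (.par P Q')
  | congr : SC P P₁ → RW P₁ P₂ → SC P₂ P' → RW P P'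

/-- Reflexive-transitive closure of the distribution rewriting. -/
def Rws : Proc → Proc → Prop := Relation.ReflTransGen RW

/-- Normal forms for the distribution rewriting. -/
def NF (P : Proc) : Prop := ¬ ∃ P', RW P P'

/-- Prime processes. -/
def IsPrime (P : Proc) : Prop :=
  ¬ Bisim P .nil ∧ ∀ Q R, Bisim P (.par Q R) → Bisim Q .nil ∨ Bisim R .nil

/-!
We argue with act-bisimilarity `≈ₐ`, the bisimilarity that matches visible actions only. It is
implied by `∼`, it is a congruence, it preserves the number of prefixes, and it is cancellative, so
every process decomposes uniquely into `≈ₐ`-primes.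

If `η.P ≈ₐ Q ‖ Q'` with nontrivial factors, let `p` be a prime factor of `Q ‖ Q'`. Each move of
`p` is an `η`-move, and cancelling the context shows that all its derivatives are equivalent, so
`p ≈ₐ η.x`. For two prime factors `p ≈ₐ η.x` and `q ≈ₐ η.y`, the two ways of answering the
`η`-move of `η.P` give `x ‖ η.y ≈ₐ y ‖ η.x`, and unique decomposition (`η.x` is too large to be a
factor of `x`) forces `η.x ≈ₐ η.y`. Hence `η.P ≈ₐ (η.A)^k` with `k ≥ 2`.

The distribution law is sound for `∼` and terminates. A normal prefix `η.A` is `≈ₐ`-prime: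
otherwise it is equivalent to a power `(η.C)^k` of a normal prefix with `k ≥ 2`, its `η`-move gives
`A ≈ₐ C ‖ (η.C)^(k-1)`, and by induction on size these normal forms are structurally congruent, so
the law would still apply to `η.A`. By unique decomposition, act-bisimilar normal forms are
therefore structurally congruent. Normalising `η.P` and `(η.A)^k` upgrades `≈ₐ` to `∼`.
-/

theorem Act.co_co (a : Act) : a.co.co = a := by cases a <;> rfl

/-- `τ` is a synchronisation, which consumes two prefixes. -/
def Lab.weight : Lab → ℕ
  | .act _ => 1
  | .tau => 2

namespace Step

theorem size_eq {P P' : Proc} {μ : Lab} (h : Step P μ P') : P.size = P'.size + μ.weight := by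
  induction h <;> simp only [Proc.size, Lab.weight] at * <;> omega

theorem size_eq_add_one {P P' : Proc} {a : Act} (h : Step P (.act a) P') :
    P.size = P'.size + 1 :=
  h.size_eq

theorem size_pos {P P' : Proc} {μ : Lab} (h : Step P μ P') : 0 < P.size := by
  have := h.size_eq
  cases μ <;> simp only [Lab.weight] at this <;> omega

theorem pre_inv {η : Act} {P X : Proc} {μ : Lab} (h : Step (.pre η P) μ X) :
    μ = .act η ∧ X = P := by
  cases h; exact ⟨rfl, rfl⟩

theorem par_act_inv {P Q X : Proc} {a : Act} (h : Step (.par P Q) (.act a) X) :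
    (∃ P', Step P (.act a) P' ∧ X = .par P' Q) ∨ (∃ Q', Step Q (.act a) Q' ∧ X = .par P Q') := by
  cases h with
  | parL _ h => exact .inl ⟨_, h, rfl⟩
  | parR _ h => exact .inr ⟨_, h, rfl⟩

end Step

theorem Proc.exists_act_step {P : Proc} (h : 0 < P.size) : ∃ a P', Step P (.act a) P' := by
  induction P with
  | nil => simp [Proc.size] at h
  | pre η Q => exact ⟨η, Q, .pre η Q⟩
  | par Q R ihQ ihR =>
    simp only [Proc.size] at h
    rcases Nat.eq_zero_or_pos Q.size with hQ | hQ
    · obtain ⟨a, R', hs⟩ := ihR (by omega)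
      exact ⟨a, _, .parR Q hs⟩
    · obtain ⟨a, Q', hs⟩ := ihQ hQ
      exact ⟨a, _, .parL R hs⟩

/-! ### Structural congruence is a bisimulation -/

def SimUpToSC (P Q : Proc) : Prop := ∀ μ P', Step P μ P' → ∃ Q', Step Q μ Q' ∧ SC P' Q'

theorem SimUpToSC.trans {P Q R : Proc} (h₁ : SimUpToSC P Q) (h₂ : SimUpToSC Q R) :
    SimUpToSC P R := fun μ P' hs => by
  obtain ⟨Q', hQ, hPQ⟩ := h₁ μ P' hs
  obtain ⟨R', hR, hQR⟩ := h₂ μ Q' hQ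
  exact ⟨R', hR, hPQ.trans hQR⟩

theorem SimUpToSC.par {P P' Q Q' : Proc} (hP : SimUpToSC P P') (hQ : SimUpToSC Q Q')
    (sP : SC P P') (sQ : SC Q Q') : SimUpToSC (.par P Q) (.par P' Q') := by
  intro μ X hs
  cases hs with
  | parL _ h =>
    obtain ⟨Y, hY, sY⟩ := hP _ _ h
    exact ⟨_, .parL _ hY, .par sY sQ⟩
  | parR _ h =>
    obtain ⟨Y, hY, sY⟩ := hQ _ _ h
    exact ⟨_, .parR _ hY, .par sP sY⟩
  | syn h₁ h₂ =>
    obtain ⟨Y₁, hY₁, sY₁⟩ := hP _ _ h₁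
    obtain ⟨Y₂, hY₂, sY₂⟩ := hQ _ _ h₂
    exact ⟨_, .syn hY₁ hY₂, .par sY₁ sY₂⟩

theorem simUpToSC_par_comm (P Q : Proc) : SimUpToSC (.par P Q) (.par Q P) := by
  intro μ X hs
  cases hs with
  | parL _ h => exact ⟨_, .parR _ h, .comm _ _⟩
  | parR _ h => exact ⟨_, .parL _ h, .comm _ _⟩
  | syn h₁ h₂ => exact ⟨_, .syn h₂ (by rwa [Act.co_co]), .comm _ _⟩

theorem simUpToSC_par_assoc (P Q R : Proc) :
    SimUpToSC (.par P (.par Q R)) (.par (.par P Q) R) := by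
  intro μ X hs
  cases hs with
  | parL _ h => exact ⟨_, .parL _ (.parL _ h), .assoc _ _ _⟩
  | parR _ h =>
    cases h with
    | parL _ h => exact ⟨_, .parL _ (.parR _ h), .assoc _ _ _⟩
    | parR _ h => exact ⟨_, .parR _ h, .assoc _ _ _⟩
    | syn h₁ h₂ => exact ⟨_, .syn (.parR _ h₁) h₂, .assoc _ _ _⟩
  | syn h₁ h₂ =>
    cases h₂ with
    | parL _ h => exact ⟨_, .parL _ (.syn h₁ h), .assoc _ _ _⟩
    | parR _ h => exact ⟨_, .syn (.parL _ h₁) h, .assoc _ _ _⟩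

theorem simUpToSC_par_assoc_symm (P Q R : Proc) :
    SimUpToSC (.par (.par P Q) R) (.par P (.par Q R)) := by
  intro μ X hs
  cases hs with
  | parL _ h =>
    cases h with
    | parL _ h => exact ⟨_, .parL _ h, (SC.assoc _ _ _).symm⟩
    | parR _ h => exact ⟨_, .parR _ (.parL _ h), (SC.assoc _ _ _).symm⟩
    | syn h₁ h₂ => exact ⟨_, .syn h₁ (.parL _ h₂), (SC.assoc _ _ _).symm⟩
  | parR _ h => exact ⟨_, .parR _ (.parR _ h), (SC.assoc _ _ _).symm⟩
  | syn h₁ h₂ =>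
    cases h₁ with
    | parL _ h => exact ⟨_, .syn h (.parR _ h₂), (SC.assoc _ _ _).symm⟩
    | parR _ h => exact ⟨_, .parR _ (.syn h h₂), (SC.assoc _ _ _).symm⟩

namespace SC

theorem simUpToSC {P Q : Proc} (h : SC P Q) : SimUpToSC P Q ∧ SimUpToSC Q P := by
  induction h with
  | refl P => exact ⟨fun μ P' hs => ⟨P', hs, .refl _⟩, fun μ P' hs => ⟨P', hs, .refl _⟩⟩
  | symm _ ih => exact ih.symm
  | trans _ _ ih₁ ih₂ => exact ⟨ih₁.1.trans ih₂.1, ih₂.2.trans ih₁.2⟩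
  | comm P Q => exact ⟨simUpToSC_par_comm P Q, simUpToSC_par_comm Q P⟩
  | assoc P Q R => exact ⟨simUpToSC_par_assoc P Q R, simUpToSC_par_assoc_symm P Q R⟩
  | unit P =>
    refine ⟨fun μ X hs => ?_, fun μ X hs => ⟨_, .parL _ hs, .symm (.unit _)⟩⟩
    cases hs with
    | parL _ h => exact ⟨_, h, .unit _⟩
    | parR _ h => cases h
    | syn _ h => cases h
  | pre η h =>
    refine ⟨fun μ X hs => ?_, fun μ X hs => ?_⟩ <;> obtain ⟨rfl, rfl⟩ := hs.pre_inv
    exacts [⟨_, .pre _ _, h⟩, ⟨_, .pre _ _, h.symm⟩]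
  | par h₁ h₂ ih₁ ih₂ =>
    exact ⟨ih₁.1.par ih₂.1 h₁ h₂, ih₁.2.par ih₂.2 h₁.symm h₂.symm⟩

theorem par_left_comm (P Q R : Proc) : SC (.par P (.par Q R)) (.par Q (.par P R)) :=
  (assoc _ _ _).trans ((par (comm _ _) (refl _)).trans (assoc _ _ _).symm)

end SC

/-! ### Strong and act-bisimilarity -/

/-- `BisimOn true` is strong bisimilarity; `BisimOn false`, written `≈ₐ`, need not answer
`τ`-moves. -/
def Lab.Matched (t : Bool) : Lab → Prop
  | .act _ => True
  | .tau => t = true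

theorem Lab.matched_act {t : Bool} {a : Act} : (Lab.act a).Matched t := trivial

def IsBisimOn (t : Bool) (R : Proc → Proc → Prop) : Prop :=
  (∀ P Q, R P Q → R Q P) ∧
  ∀ P Q μ P', μ.Matched t → R P Q → Step P μ P' → ∃ Q', Step Q μ Q' ∧ R P' Q'

def BisimOn (t : Bool) (P Q : Proc) : Prop := ∃ R, IsBisimOn t R ∧ R P Q

infix:50 " ≈ₐ " => BisimOn false

theorem bisim_iff_bisimOn_true {P Q : Proc} : Bisim P Q ↔ BisimOn true P Q := by
  constructor
  · rintro ⟨R, ⟨hR, hstep⟩, h⟩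
    exact ⟨R, ⟨hR, fun P Q μ P' _ => hstep P Q μ P'⟩, h⟩
  · rintro ⟨R, ⟨hR, hstep⟩, h⟩
    exact ⟨R, ⟨hR, fun P Q μ P' => hstep P Q μ P' (by cases μ <;> trivial)⟩, h⟩

namespace BisimOn

variable {t : Bool}

theorem step {P Q P' : Proc} {μ : Lab} (h : BisimOn t P Q) (hμ : μ.Matched t)
    (hs : Step P μ P') : ∃ Q', Step Q μ Q' ∧ BisimOn t P' Q' := by
  obtain ⟨R, hR, hPQ⟩ := h
  obtain ⟨Q', hQ, hR'⟩ := hR.2 _ _ _ _ hμ hPQ hs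
  exact ⟨Q', hQ, R, hR, hR'⟩

theorem symm {P Q : Proc} (h : BisimOn t P Q) : BisimOn t Q P := by
  obtain ⟨R, hR, hPQ⟩ := h
  exact ⟨R, hR, hR.1 _ _ hPQ⟩

theorem refl (P : Proc) : BisimOn t P P := by
  refine ⟨Eq, ⟨fun _ _ h => h.symm, ?_⟩, rfl⟩
  rintro P _ μ P' _ rfl hs
  exact ⟨P', hs, rfl⟩

theorem trans {P Q R : Proc} (h₁ : BisimOn t P Q) (h₂ : BisimOn t Q R) : BisimOn t P R := by
  refine ⟨fun X Z => ∃ Y, BisimOn t X Y ∧ BisimOn t Y Z, ⟨?_, ?_⟩, Q, h₁, h₂⟩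
  · rintro X Z ⟨Y, hXY, hYZ⟩
    exact ⟨Y, hYZ.symm, hXY.symm⟩
  · rintro X Z μ X' hμ ⟨Y, hXY, hYZ⟩ hs
    obtain ⟨Y', hY, hXY'⟩ := hXY.step hμ hs
    obtain ⟨Z', hZ, hYZ'⟩ := hYZ.step hμ hY
    exact ⟨Z', hZ, Y', hXY', hYZ'⟩

theorem mono {P Q : Proc} (h : BisimOn true P Q) : BisimOn t P Q := by
  obtain ⟨R, ⟨hR, hstep⟩, hPQ⟩ := h
  exact ⟨R, ⟨hR, fun P Q μ P' _ => hstep P Q μ P' (by cases μ <;> trivial)⟩, hPQ⟩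

theorem intro {P Q : Proc}
    (h₁ : ∀ μ P', μ.Matched t → Step P μ P' → ∃ Q', Step Q μ Q' ∧ BisimOn t P' Q')
    (h₂ : ∀ μ Q', μ.Matched t → Step Q μ Q' → ∃ P', Step P μ P' ∧ BisimOn t P' Q') :
    BisimOn t P Q := by
  refine ⟨fun X Y => BisimOn t X Y ∨ (X = P ∧ Y = Q) ∨ (X = Q ∧ Y = P), ⟨?_, ?_⟩,
    .inr (.inl ⟨rfl, rfl⟩)⟩
  · rintro X Y (h | ⟨rfl, rfl⟩ | ⟨rfl, rfl⟩)
    exacts [.inl h.symm, .inr (.inr ⟨rfl, rfl⟩), .inr (.inl ⟨rfl, rfl⟩)]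
  · rintro X Y μ X' hμ (h | ⟨rfl, rfl⟩ | ⟨rfl, rfl⟩) hs
    · obtain ⟨Y', hY, h'⟩ := h.step hμ hs
      exact ⟨Y', hY, .inl h'⟩
    · obtain ⟨Y', hY, h'⟩ := h₁ μ X' hμ hs
      exact ⟨Y', hY, .inl h'⟩
    · obtain ⟨Y', hY, h'⟩ := h₂ μ X' hμ hs
      exact ⟨Y', hY, .inl h'.symm⟩

theorem of_sc {P Q : Proc} (h : SC P Q) : BisimOn t P Q :=
  ⟨SC, ⟨fun _ _ h => h.symm, fun _ _ _ _ _ h hs => h.simUpToSC.1 _ _ hs⟩, h⟩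

theorem par_left {P Q : Proc} (R : Proc) (h : BisimOn t P Q) :
    BisimOn t (.par P R) (.par Q R) := by
  refine ⟨fun X Y => ∃ A B C, X = .par A C ∧ Y = .par B C ∧ BisimOn t A B, ⟨?_, ?_⟩,
    P, Q, R, rfl, rfl, h⟩
  · rintro X Y ⟨A, B, C, rfl, rfl, hAB⟩
    exact ⟨B, A, C, rfl, rfl, hAB.symm⟩
  · rintro X Y μ X' hμ ⟨A, B, C, rfl, rfl, hAB⟩ hs
    cases hs with
    | parL _ h =>
      obtain ⟨B', hB, hAB'⟩ := hAB.step hμ h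
      exact ⟨_, .parL _ hB, _, _, _, rfl, rfl, hAB'⟩
    | parR _ h => exact ⟨_, .parR _ h, _, _, _, rfl, rfl, hAB⟩
    | syn h₁ h₂ =>
      obtain ⟨B', hB, hAB'⟩ := hAB.step Lab.matched_act h₁
      exact ⟨_, .syn hB h₂, _, _, _, rfl, rfl, hAB'⟩

theorem par {P Q P' Q' : Proc} (h : BisimOn t P Q) (h' : BisimOn t P' Q') :
    BisimOn t (.par P P') (.par Q Q') :=
  (par_left P' h).trans <| (of_sc (.comm _ _)).trans <| (par_left Q h').trans (of_sc (.comm _ _))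

theorem pre (η : Act) {P Q : Proc} (h : BisimOn t P Q) : BisimOn t (.pre η P) (.pre η Q) := by
  refine intro (fun μ X _ hs => ?_) (fun μ X _ hs => ?_) <;> obtain ⟨rfl, rfl⟩ := hs.pre_inv
  exacts [⟨Q, .pre η Q, h⟩, ⟨P, .pre η P, h⟩]

theorem pre_inv {η η' : Act} {P Q : Proc} (h : BisimOn t (.pre η P) (.pre η' Q)) :
    η = η' ∧ BisimOn t P Q := by
  obtain ⟨X, hs, h'⟩ := h.step Lab.matched_act (.pre η P)
  obtain ⟨he, rfl⟩ := hs.pre_inv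
  exact ⟨Lab.act.inj he, h'⟩

theorem size_eq {P Q : Proc} (h : BisimOn t P Q) : P.size = Q.size := by
  obtain ⟨n, hn⟩ : ∃ n, P.size = n := ⟨_, rfl⟩
  induction n using Nat.strong_induction_on generalizing P Q with
  | _ n ih =>
  rcases Nat.eq_zero_or_pos P.size with hP | hP
  · by_contra hne
    obtain ⟨a, Q', hs⟩ := Proc.exists_act_step (P := Q) (by omega)
    obtain ⟨P', hP', -⟩ := h.symm.step Lab.matched_act hs
    have := hP'.size_pos
    omega
  · obtain ⟨a, P', hs⟩ := Proc.exists_act_step hP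
    obtain ⟨Q', hQ', h'⟩ := h.step Lab.matched_act hs
    have hP' := hs.size_eq_add_one
    have hQ'' := hQ'.size_eq_add_one
    have := ih _ (by omega) h' rfl
    omega

theorem nil_iff {P : Proc} : BisimOn t P .nil ↔ P.size = 0 :=
  ⟨size_eq, fun h =>
    intro (fun _ _ _ hs => absurd hs.size_pos (by omega)) (fun _ _ _ hs => nomatch hs)⟩

theorem par_nil_right {P R : Proc} (h : BisimOn t R .nil) : BisimOn t (.par P R) P :=
  ((refl P).par h).trans (of_sc (.unit P))

theorem par_nil_left {P R : Proc} (h : BisimOn t R .nil) : BisimOn t (.par R P) P :=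
  (of_sc (.comm _ _)).trans (par_nil_right h)

end BisimOn

theorem actBisim_intro {P Q : Proc}
    (h₁ : ∀ a P', Step P (.act a) P' → ∃ Q', Step Q (.act a) Q' ∧ P' ≈ₐ Q')
    (h₂ : ∀ a Q', Step Q (.act a) Q' → ∃ P', Step P (.act a) P' ∧ P' ≈ₐ Q') : P ≈ₐ Q := by
  refine BisimOn.intro (fun μ P' hμ => ?_) (fun μ Q' hμ => ?_) <;> cases μ
  exacts [h₁ _ P', absurd hμ Bool.false_ne_true, h₂ _ Q', absurd hμ Bool.false_ne_true]

/-! ### Parallel components -/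

def parList : List Proc → Proc
  | [] => .nil
  | P :: l => .par P (parList l)

def Proc.comps : Proc → List Proc
  | .nil => []
  | .pre η P => [.pre η P]
  | .par P Q => P.comps ++ Q.comps

theorem Proc.size_parList (l : List Proc) : (parList l).size = (l.map Proc.size).sum := by
  induction l with
  | nil => rfl
  | cons P l ih => simp [parList, Proc.size, ih]

theorem Proc.exists_eq_pre_of_mem_comps {P c : Proc} (h : c ∈ P.comps) :
    ∃ η B, c = .pre η B := by
  induction P with
  | nil => simp [Proc.comps] at h
  | pre η B => simp only [Proc.comps, List.mem_singleton] at h; exact ⟨η, B, h⟩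
  | par Q R ihQ ihR =>
    rcases List.mem_append.1 h with h | h
    exacts [ihQ h, ihR h]

theorem Proc.size_le_of_mem_comps {P c : Proc} (h : c ∈ P.comps) : c.size ≤ P.size := by
  induction P with
  | nil => simp [Proc.comps] at h
  | pre η B => simp only [Proc.comps, List.mem_singleton] at h; exact h ▸ le_rfl
  | par Q R ihQ ihR =>
    simp only [Proc.size]
    rcases List.mem_append.1 h with h | h
    · have := ihQ h; omega
    · have := ihR h; omega

theorem Step.parList_inv {l : List Proc} {a : Act} {X : Proc} (h : Step (parList l) (.act a) X) :
    ∃ l₁ r l₂ r', l = l₁ ++ r :: l₂ ∧ Step r (.act a) r' ∧ X = parList (l₁ ++ r' :: l₂) := by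
  induction l generalizing X with
  | nil => nomatch h
  | cons P l ih =>
    rcases h.par_act_inv with ⟨P', hP, rfl⟩ | ⟨X', hX, rfl⟩
    · exact ⟨[], P, l, P', rfl, hP, rfl⟩
    · obtain ⟨l₁, r, l₂, r', rfl, hr, rfl⟩ := ih hX
      exact ⟨P :: l₁, r, l₂, r', rfl, hr, rfl⟩

namespace SC

theorem parList_append (l₁ l₂ : List Proc) :
    SC (parList (l₁ ++ l₂)) (.par (parList l₁) (parList l₂)) := by
  induction l₁ with
  | nil => exact ((comm _ _).trans (unit _)).symm
  | cons P l ih => exact (par (refl P) ih).trans (assoc _ _ _)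

theorem parList_comps (P : Proc) : SC P (parList P.comps) := by
  induction P with
  | nil => exact refl _
  | pre η B => exact (unit _).symm
  | par Q R ihQ ihR => exact (par ihQ ihR).trans (parList_append _ _).symm

theorem parList_of_perm {l₁ l₂ : List Proc} (h : l₁.Perm l₂) : SC (parList l₁) (parList l₂) := by
  induction h with
  | nil => exact refl _
  | cons P _ ih => exact par (refl P) ih
  | swap P Q l => exact par_left_comm Q P (parList l)
  | trans _ _ ih₁ ih₂ => exact ih₁.trans ih₂

theorem parList_of_rel {l₁ l₂ : List Proc} (h : Multiset.Rel SC l₁ l₂) :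
    SC (parList l₁) (parList l₂) := by
  classical
  induction l₁ generalizing l₂ with
  | nil =>
    obtain rfl : l₂ = [] := by simpa using Multiset.rel_zero_left.1 h
    exact refl _
  | cons P l₁ ih =>
    have h : Multiset.Rel SC (P ::ₘ l₁) l₂ := h
    obtain ⟨Q, t, hPQ, hrel, ht⟩ := Multiset.rel_cons_left.1 h
    have hQ : Q ∈ l₂ := by simp [← Multiset.mem_coe, ht]
    have ht' : t = ↑(l₂.erase Q) := by rw [← Multiset.coe_erase, ht, Multiset.erase_cons_head]
    subst ht'
    exact (par hPQ (ih hrel)).trans (parList_of_perm (List.perm_cons_erase hQ)).symm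

end SC

def PreSC (c d : Proc) : Prop := ∃ η B B', c = .pre η B ∧ d = .pre η B' ∧ SC B B'

theorem PreSC.symm {c d : Proc} (h : PreSC c d) : PreSC d c := by
  obtain ⟨η, B, B', rfl, rfl, h⟩ := h
  exact ⟨η, B', B, rfl, rfl, h.symm⟩

theorem PreSC.trans {c d e : Proc} (h₁ : PreSC c d) (h₂ : PreSC d e) : PreSC c e := by
  obtain ⟨η, B, B', rfl, rfl, h₁⟩ := h₁
  obtain ⟨η', C, C', he, rfl, h₂⟩ := h₂
  obtain ⟨rfl, rfl⟩ := Proc.pre.inj he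
  exact ⟨η, B, C', rfl, rfl, h₁.trans h₂⟩

instance : IsTrans Proc PreSC := ⟨fun _ _ _ => PreSC.trans⟩

theorem PreSC.sc {c d : Proc} (h : PreSC c d) : SC c d := by
  obtain ⟨η, B, B', rfl, rfl, h⟩ := h
  exact .pre η h

theorem Proc.rel_preSC_comps_self (P : Proc) : Multiset.Rel PreSC P.comps P.comps :=
  Multiset.rel_refl_of_refl_on fun c hc => by
    obtain ⟨η, B, rfl⟩ := Proc.exists_eq_pre_of_mem_comps (Multiset.mem_coe.1 hc)
    exact ⟨η, B, B, rfl, rfl, .refl B⟩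

namespace SC

theorem rel_comps {P Q : Proc} (h : SC P Q) : Multiset.Rel PreSC P.comps Q.comps := by
  induction h with
  | refl P => exact P.rel_preSC_comps_self
  | symm _ ih => exact (Multiset.rel_flip.2 ih).mono fun _ _ _ _ h => h.symm
  | trans _ _ ih₁ ih₂ => exact ih₁.trans _ ih₂
  | comm P Q =>
    have := (P.par Q).rel_preSC_comps_self
    simpa only [Proc.comps, ← Multiset.coe_add, add_comm (P.comps : Multiset Proc)] using this
  | assoc P Q R =>
    have := (P.par (Q.par R)).rel_preSC_comps_self
    simpa only [Proc.comps, List.append_assoc] using this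
  | unit P => simpa only [Proc.comps, List.append_nil] using P.rel_preSC_comps_self
  | pre η h => exact .cons ⟨η, _, _, rfl, rfl, h⟩ .zero
  | par _ _ ih₁ ih₂ =>
    simpa only [Proc.comps, ← Multiset.coe_add] using ih₁.add ih₂

theorem exists_comps_eq_pre {X B : Proc} {η : Act} (h : SC X (.pre η B)) :
    ∃ B', X.comps = [.pre η B'] ∧ SC B' B := by
  have hrel : Multiset.Rel PreSC (.pre η B ::ₘ 0) X.comps := h.symm.rel_comps
  obtain ⟨d, t, ⟨η', C, C', he, rfl, hC⟩, hrel, ht⟩ := Multiset.rel_cons_left.1 hrel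
  obtain ⟨rfl, rfl⟩ := Proc.pre.inj he
  obtain rfl := Multiset.rel_zero_left.1 hrel
  exact ⟨C', by simpa using ht, hC.symm⟩

theorem pre_inj {η η' : Act} {B B' : Proc} (h : SC (.pre η B) (.pre η' B')) :
    η = η' ∧ SC B B' := by
  obtain ⟨C, hC, hCB⟩ := exists_comps_eq_pre h
  obtain ⟨rfl, rfl⟩ := Proc.pre.inj (List.singleton_inj.1 hC)
  exact ⟨rfl, hCB⟩

theorem nil_of_comps_eq_nil {P : Proc} (h : P.comps = []) : SC P .nil := by
  simpa [h, parList] using parList_comps P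

theorem par_pre_inv {P Q B : Proc} {η : Act} (h : SC (.par P Q) (.pre η B)) :
    (SC P (.pre η B) ∧ SC Q .nil) ∨ (SC P .nil ∧ SC Q (.pre η B)) := by
  obtain ⟨B', hcomps, hB⟩ := exists_comps_eq_pre h
  have hsingle : ∀ {R : Proc}, R.comps = [.pre η B'] → SC R (.pre η B) := fun hR =>
    ((parList_comps _).trans (by rw [hR]; exact unit _)).trans (pre η hB)
  rcases List.append_eq_singleton_iff.1 hcomps with ⟨hP, hQ⟩ | ⟨hP, hQ⟩
  · exact .inr ⟨nil_of_comps_eq_nil hP, hsingle hQ⟩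
  · exact .inl ⟨hsingle hP, nil_of_comps_eq_nil hQ⟩

theorem size_eq {P Q : Proc} (h : SC P Q) : P.size = Q.size := by
  induction h <;> (try simp only [Proc.size] at *) <;> omega

end SC

/-! ### The distribution law -/

/-- The sum of `2 ^ depth` over all prefix occurrences; the distribution law decreases it. -/
def Proc.depthWeight : Proc → ℕ
  | .nil => 0
  | .pre _ P => 2 * P.depthWeight + 1
  | .par P Q => P.depthWeight + Q.depthWeight

theorem Proc.depthWeight_pow (P : Proc) (k : ℕ) : (pow P k).depthWeight = k * P.depthWeight := by
  induction k with
  | zero => simp [pow, Proc.depthWeight]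
  | succ k ih => simp only [pow, Proc.depthWeight, ih]; ring

theorem SC.depthWeight_eq {P Q : Proc} (h : SC P Q) : P.depthWeight = Q.depthWeight := by
  induction h <;> (try simp only [Proc.depthWeight] at *) <;> omega

theorem SC.pow_add (P : Proc) (a b : ℕ) : SC (.par (pow P a) (pow P b)) (pow P (a + b)) := by
  induction a with
  | zero => simpa [pow] using (comm _ _).trans (unit _)
  | succ a ih =>
    rw [Nat.add_right_comm]
    exact (assoc _ _ _).symm.trans (par (refl P) ih)

theorem SC.pow_mul (P : Proc) (a b : ℕ) : SC (pow (pow P a) b) (pow P (a * b)) := by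
  induction b with
  | zero => exact refl _
  | succ b ih =>
    rw [Nat.mul_succ, Nat.add_comm (a * b)]
    exact (par (refl _) ih).trans (pow_add P a (a * b))

theorem Step.pow_pre_inv {η : Act} {B X : Proc} {m : ℕ} {μ : Lab}
    (h : Step (pow (.pre η B) m) μ X) :
    ∃ k, m = k + 1 ∧ μ = .act η ∧ SC X (.par B (pow (.pre η B) k)) := by
  induction m generalizing μ X with
  | zero => nomatch h
  | succ m ih =>
    cases h with
    | parL _ h =>
      obtain ⟨rfl, rfl⟩ := h.pre_inv
      exact ⟨m, rfl, rfl, .refl _⟩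
    | parR _ h =>
      obtain ⟨k, rfl, rfl, hX⟩ := ih h
      exact ⟨k + 1, rfl, rfl, (SC.par (.refl _) hX).trans (SC.par_left_comm _ _ _)⟩
    | syn h₁ h₂ =>
      obtain ⟨he₁, -⟩ := h₁.pre_inv
      obtain ⟨-, -, he₂, -⟩ := ih h₂
      cases Lab.act.inj he₁
      cases η <;> cases he₂

theorem BisimOn.pow {t : Bool} {P Q : Proc} (h : BisimOn t P Q) (k : ℕ) :
    BisimOn t (pow P k) (pow Q k) := by
  induction k with
  | zero => exact refl _
  | succ k ih => exact h.par ih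

theorem bisimOn_parList_pow {t : Bool} {l : List Proc} {P : Proc} (h : ∀ Q ∈ l, BisimOn t Q P) :
    BisimOn t (parList l) (pow P l.length) := by
  induction l with
  | nil => exact .refl _
  | cons Q l ih => exact (h Q (by simp)).par (ih fun R hR => h R (by simp [hR]))

namespace RW

theorem depthWeight_lt {P P' : Proc} (h : RW P P') : P'.depthWeight < P.depthWeight := by
  induction h with
  | @head η B k hk =>
    simp only [Proc.depthWeight, Proc.depthWeight_pow]
    nlinarith
  | congr h₁ _ h₃ => rw [h₁.depthWeight_eq, ← h₃.depthWeight_eq]; assumption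
  | _ => simp only [Proc.depthWeight]; omega

theorem size_pos {P P' : Proc} (h : RW P P') : 0 < P.size := by
  induction h with
  | congr h₁ => rwa [h₁.size_eq]
  | _ => simp only [Proc.size]; omega

theorem not_sc_nil {P P' : Proc} (h : RW P P') : ¬ SC P .nil := fun hP => by
  have := hP.size_eq
  have := h.size_pos
  simp_all [Proc.size]

theorem pre_inv {X X' : Proc} (h : RW X X') : ∀ {η : Act} {B : Proc}, SC X (.pre η B) →
    (∃ B', RW B B' ∧ SC X' (.pre η B')) ∨
    (∃ R k, 1 ≤ k ∧ SC B (.par R (pow (.pre η R) k)) ∧ SC X' (pow (.pre η R) (k + 1))) := by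
  induction h with
  | @head η₀ P k hk =>
    intro η B hX
    obtain ⟨rfl, hP⟩ := hX.pre_inj
    exact .inr ⟨P, k, hk, hP.symm, .refl _⟩
  | pre η₀ h =>
    intro η B hX
    obtain ⟨rfl, hP⟩ := hX.pre_inj
    exact .inl ⟨_, .congr hP.symm h (.refl _), .refl _⟩
  | @parL P P' Q h ih =>
    intro η B hX
    rcases hX.par_pre_inv with ⟨hP, hQ⟩ | ⟨hP, -⟩
    · have hcancel : ∀ Z, SC (.par Z Q) Z := fun Z => (SC.par (.refl Z) hQ).trans (.unit Z)
      rcases ih hP with ⟨B', hB, hX'⟩ | ⟨R, k, hk, hB, hX'⟩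
      exacts [.inl ⟨B', hB, (hcancel _).trans hX'⟩, .inr ⟨R, k, hk, hB, (hcancel _).trans hX'⟩]
    · exact absurd hP h.not_sc_nil
  | @parR Q Q' P h ih =>
    intro η B hX
    rcases hX.par_pre_inv with ⟨-, hQ⟩ | ⟨hP, hQ⟩
    · exact absurd hQ h.not_sc_nil
    · have hcancel : ∀ Z, SC (.par P Z) Z :=
        fun Z => (SC.par hP (.refl Z)).trans ((SC.comm _ _).trans (.unit Z))
      rcases ih hQ with ⟨B', hB, hX'⟩ | ⟨R, k, hk, hB, hX'⟩
      exacts [.inl ⟨B', hB, (hcancel _).trans hX'⟩, .inr ⟨R, k, hk, hB, (hcancel _).trans hX'⟩]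
  | congr h₁ _ h₃ ih =>
    intro η B hX
    rcases ih (h₁.symm.trans hX) with ⟨B', hB, hX'⟩ | ⟨R, k, hk, hB, hX'⟩
    exacts [.inl ⟨B', hB, h₃.symm.trans hX'⟩, .inr ⟨R, k, hk, hB, h₃.symm.trans hX'⟩]

end RW

theorem BisimOn.of_rw {t : Bool} {P Q : Proc} (h : RW P Q) : BisimOn t P Q := by
  induction h with
  | @head η B k hk =>
    refine intro (fun μ X _ hs => ?_) (fun μ X _ hs => ?_)
    · obtain ⟨rfl, rfl⟩ := hs.pre_inv
      exact ⟨_, .parL _ (.pre η B), refl _⟩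
    · obtain ⟨k', hk', rfl, hX⟩ := hs.pow_pre_inv
      obtain rfl : k' = k := by omega
      exact ⟨_, .pre η _, of_sc hX.symm⟩
  | pre η _ ih => exact ih.pre η
  | parL Q _ ih => exact ih.par (refl Q)
  | parR P _ ih => exact (refl P).par ih
  | congr h₁ _ h₃ ih => exact (of_sc h₁).trans (ih.trans (of_sc h₃))

theorem BisimOn.of_rws {t : Bool} {P Q : Proc} (h : Rws P Q) : BisimOn t P Q := by
  induction h with
  | refl => exact refl _
  | tail _ h ih => exact ih.trans (of_rw h)

namespace NF

theorem of_sc {P Q : Proc} (h : SC P Q) (hP : NF P) : NF Q :=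
  fun ⟨X, hX⟩ => hP ⟨X, .congr h hX (.refl _)⟩

theorem of_pre {η : Act} {B : Proc} (h : NF (.pre η B)) : NF B :=
  fun ⟨X, hX⟩ => h ⟨.pre η X, .pre η hX⟩

theorem of_mem_comps {P c : Proc} (hP : NF P) (hc : c ∈ P.comps) : NF c := fun ⟨_, hc'⟩ =>
  hP ⟨_, .congr ((SC.parList_comps P).trans (SC.parList_of_perm (List.perm_cons_erase hc)))
    (.parL _ hc') (.refl _)⟩

theorem of_forall_mem_comps {P : Proc} (h : ∀ c ∈ P.comps, NF c) : NF P := by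
  rintro ⟨X, hX⟩
  induction hX with
  | head hk => exact h _ (List.mem_singleton_self _) ⟨_, .head hk⟩
  | pre η hrw => exact h _ (List.mem_singleton_self _) ⟨_, .pre η hrw⟩
  | parL _ _ ih => exact ih fun c hc => h c (List.mem_append_left _ hc)
  | parR _ _ ih => exact ih fun c hc => h c (List.mem_append_right _ hc)
  | congr h₁ _ _ ih =>
    refine ih fun c hc => ?_
    obtain ⟨d, hd, hdc⟩ := Multiset.exists_mem_of_rel_of_mem
      (Multiset.rel_flip.2 h₁.rel_comps) (Multiset.mem_coe.2 hc)
    exact of_sc hdc.sc (h d hd)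

theorem par {P Q : Proc} (hP : NF P) (hQ : NF Q) : NF (.par P Q) :=
  of_forall_mem_comps fun _ hc => (List.mem_append.1 hc).elim hP.of_mem_comps hQ.of_mem_comps

theorem pow {P : Proc} (h : NF P) (k : ℕ) : NF (pow P k) := by
  induction k with
  | zero => exact fun ⟨_, hX⟩ => hX.not_sc_nil (.refl _)
  | succ k ih => exact h.par ih

end NF

theorem exists_rws_nf (P : Proc) : ∃ N, Rws P N ∧ NF N := by
  have wf : WellFounded fun X Y : Proc => RW Y X :=
    Subrelation.wf (fun h => h.depthWeight_lt) (InvImage.wf Proc.depthWeight wellFounded_lt)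
  obtain ⟨N, hPN, hmin⟩ := wf.has_min {N | Rws P N} ⟨P, .refl⟩
  exact ⟨N, hPN, fun ⟨N', hN'⟩ => hmin N' (Relation.ReflTransGen.tail hPN hN') hN'⟩

theorem exists_nf_pow_bisimOn (t : Bool) (η : Act) (B : Proc) :
    ∃ A j, 0 < j ∧ NF (.pre η A) ∧ BisimOn t (.pre η B) (pow (.pre η A) j) := by
  obtain ⟨n, hn⟩ : ∃ n, B.depthWeight = n := ⟨_, rfl⟩
  induction n using Nat.strong_induction_on generalizing B with
  | _ n ih =>
  by_cases hnf : NF (.pre η B)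
  · exact ⟨B, 1, one_pos, hnf, (BisimOn.of_sc (.unit _)).symm⟩
  obtain ⟨X, hX⟩ := not_not.1 hnf
  rcases hX.pre_inv (.refl _) with ⟨B', hB, hX'⟩ | ⟨R, k, hk, hB, hX'⟩
  · obtain ⟨A, j, hj, hA, hB'A⟩ := ih _ (hn ▸ hB.depthWeight_lt) B' rfl
    exact ⟨A, j, hj, hA, ((BisimOn.of_rw hX).trans (.of_sc hX')).trans hB'A⟩
  · have hR : R.depthWeight < n := by
      have := hB.depthWeight_eq
      simp only [Proc.depthWeight, Proc.depthWeight_pow] at this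
      nlinarith
    obtain ⟨A, j, hj, hA, hRA⟩ := ih _ hR R rfl
    refine ⟨A, j * (k + 1), by positivity, hA, ?_⟩
    exact ((BisimOn.of_rw hX).trans (.of_sc hX')).trans
      ((hRA.pow _).trans (.of_sc (.pow_mul _ _ _)))

theorem exists_nf_pow_of_bisimOn_pow {t : Bool} {X B : Proc} {η : Act} {m : ℕ}
    (h : BisimOn t X (pow (.pre η B) m)) :
    ∃ A j, 0 < j ∧ NF (.pre η A) ∧ BisimOn t X (pow (.pre η A) (j * m)) := by
  obtain ⟨A, j, hj, hA, hBA⟩ := exists_nf_pow_bisimOn t η B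
  exact ⟨A, j, hj, hA, h.trans ((hBA.pow m).trans (.of_sc (.pow_mul _ _ _)))⟩

/-! ### Cancellation and unique decomposition -/

/-- The context `R'` has answered an `a`-move of the left process. Replaying `R → R'` on the left
forces a new answer; while the context answers, it shrinks, so eventually `Q` answers. -/
theorem exists_step_actBisim_of_par_actBisim_par {n : ℕ}
    (ih : ∀ P Q R : Proc, P.size + R.size < n → .par P R ≈ₐ .par Q R → P ≈ₐ Q)
    {P Q R R' : Proc} {a : Act} (hR : Step R (.act a) R') (hn : P.size + R'.size < n)
    (h : .par P R ≈ₐ .par Q R') : ∃ Q', Step Q (.act a) Q' ∧ P ≈ₐ Q' := by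
  obtain ⟨m, hm⟩ : ∃ m, R'.size = m := ⟨_, rfl⟩
  induction m using Nat.strong_induction_on generalizing R R' with
  | _ m ihm =>
  obtain ⟨U, hU, hPU⟩ := h.step Lab.matched_act (.parR P hR)
  rcases hU.par_act_inv with ⟨Q', hQ, rfl⟩ | ⟨R'', hR', rfl⟩
  · exact ⟨Q', hQ, ih P Q' R' hn hPU⟩
  · have := hR'.size_eq_add_one
    exact ihm _ (by omega) hR' (by omega) hPU rfl

theorem actBisim_par_right_cancel {P Q R : Proc} (h : .par P R ≈ₐ .par Q R) : P ≈ₐ Q := by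
  obtain ⟨n, hn⟩ : ∃ n, P.size + R.size = n := ⟨_, rfl⟩
  induction n using Nat.strong_induction_on generalizing P Q R with
  | _ n ih =>
  have ih' : ∀ P Q R : Proc, P.size + R.size < n → .par P R ≈ₐ .par Q R → P ≈ₐ Q :=
    fun P Q R hlt h => ih _ hlt h rfl
  have answer : ∀ {P Q : Proc}, P.size + R.size = n → .par P R ≈ₐ .par Q R →
      ∀ a P', Step P (.act a) P' → ∃ Q', Step Q (.act a) Q' ∧ P' ≈ₐ Q' := by
    intro P Q hn h a P' hP
    have := hP.size_eq_add_one
    obtain ⟨U, hU, hPU⟩ := h.step Lab.matched_act (.parL R hP)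
    rcases hU.par_act_inv with ⟨Q', hQ, rfl⟩ | ⟨R', hR, rfl⟩
    · exact ⟨Q', hQ, ih' P' Q' R (by omega) hPU⟩
    · have := hR.size_eq_add_one
      exact exists_step_actBisim_of_par_actBisim_par ih' hR (by omega) hPU
  have hsize : P.size = Q.size := by
    have := h.size_eq
    simp only [Proc.size] at this
    omega
  refine actBisim_intro (answer hn h) fun a Q' hQ => ?_
  obtain ⟨P', hP, h'⟩ := answer (by omega) h.symm a Q' hQ
  exact ⟨P', hP, h'.symm⟩

theorem actBisim_par_left_cancel {P Q R : Proc} (h : .par R P ≈ₐ .par R Q) : P ≈ₐ Q :=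
  actBisim_par_right_cancel <| (BisimOn.of_sc (.comm _ _)).trans <| h.trans (.of_sc (.comm _ _))

def IsActPrime (P : Proc) : Prop :=
  ¬ P ≈ₐ .nil ∧ ∀ Q R, P ≈ₐ .par Q R → Q ≈ₐ .nil ∨ R ≈ₐ .nil

namespace IsActPrime

theorem size_pos {P : Proc} (h : IsActPrime P) : 0 < P.size :=
  Nat.pos_of_ne_zero fun h0 => h.1 (BisimOn.nil_iff.2 h0)

theorem of_actBisim {P Q : Proc} (hP : IsActPrime P) (h : P ≈ₐ Q) : IsActPrime Q :=
  ⟨fun hQ => hP.1 (h.trans hQ), fun R S hQ => hP.2 R S (h.trans hQ)⟩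

theorem exists_mem_actBisim {P : Proc} {l : List Proc} (hP : IsActPrime P)
    (h : P ≈ₐ parList l) : ∃ r ∈ l, P ≈ₐ r := by
  induction l with
  | nil => exact absurd h hP.1
  | cons Q l ih =>
    rcases hP.2 Q (parList l) h with hQ | hl
    · obtain ⟨r, hr, hPr⟩ := ih (h.trans (.par_nil_left hQ))
      exact ⟨r, List.mem_cons_of_mem Q hr, hPr⟩
    · exact ⟨Q, List.mem_cons_self, h.trans (.par_nil_right hl)⟩

end IsActPrime

theorem exists_isActPrime_parList (P : Proc) :
    ∃ l, (∀ p ∈ l, IsActPrime p) ∧ P ≈ₐ parList l := by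
  obtain ⟨n, hn⟩ : ∃ n, P.size = n := ⟨_, rfl⟩
  induction n using Nat.strong_induction_on generalizing P with
  | _ n ih =>
  by_cases hP0 : P ≈ₐ .nil
  · exact ⟨[], by simp, hP0⟩
  by_cases hP : IsActPrime P
  · exact ⟨[P], by simpa using hP, .of_sc (.symm (.unit P))⟩
  obtain ⟨Q, R, hQR, hQ, hR⟩ : ∃ Q R, P ≈ₐ .par Q R ∧ ¬ Q ≈ₐ .nil ∧ ¬ R ≈ₐ .nil := by
    simpa [IsActPrime, hP0] using hP
  have hsize := hQR.size_eq
  rw [BisimOn.nil_iff] at hQ hR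
  simp only [Proc.size] at hsize
  obtain ⟨lQ, hlQ, hQl⟩ := ih Q.size (by omega) Q rfl
  obtain ⟨lR, hlR, hRl⟩ := ih R.size (by omega) R rfl
  refine ⟨lQ ++ lR, fun p hp => (List.mem_append.1 hp).elim (hlQ p) (hlR p), ?_⟩
  exact hQR.trans ((hQl.par hRl).trans (.of_sc (SC.parList_append _ _).symm))

/-- A prime `P` of maximal size, exposed on one side, is matched by a factor of the other side:
fire `R` completely, the answering factors only shrink, and in the end `P` must be one of the
untouched factors `qs`. -/
theorem exists_mem_actBisim_of_size_max {P R : Proc} {l qs : List Proc} (hP : IsActPrime P)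
    (hqs : ∀ q ∈ qs, q.size ≤ P.size) (hl : ∀ r ∈ l, r ∈ qs ∨ r.size < P.size)
    (h : .par P R ≈ₐ parList l) : ∃ q ∈ qs, P ≈ₐ q := by
  obtain ⟨n, hn⟩ : ∃ n, R.size = n := ⟨_, rfl⟩
  induction n generalizing R l with
  | zero =>
    obtain ⟨r, hr, hPr⟩ :=
      hP.exists_mem_actBisim ((BisimOn.par_nil_right (BisimOn.nil_iff.2 hn)).symm.trans h)
    have := hPr.size_eq
    exact (hl r hr).elim (fun hq => ⟨r, hq, hPr⟩) (fun hlt => absurd this hlt.ne')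
  | succ n ih =>
    obtain ⟨a, R', hR⟩ := Proc.exists_act_step (P := R) (by omega)
    have := hR.size_eq_add_one
    obtain ⟨X, hX, h'⟩ := h.step Lab.matched_act (.parR P hR)
    obtain ⟨l₁, r, l₂, r', rfl, hr, rfl⟩ := hX.parList_inv
    refine ih (fun s hs => ?_) h' (by omega)
    have := hr.size_eq_add_one
    have hr' := hl r (by simp)
    rcases List.mem_append.1 hs with hs | hs
    · exact hl s (List.mem_append_left _ hs)
    rcases List.mem_cons.1 hs with rfl | hs
    · exact .inr (hr'.elim (fun hq => by have := hqs r hq; omega) (by omega))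
    · exact hl s (List.mem_append_right _ (List.mem_cons_of_mem _ hs))

theorem exists_actBisim_of_parList_actBisim {ps qs : List Proc} (hps : ∀ p ∈ ps, IsActPrime p)
    (hqs : ∀ q ∈ qs, IsActPrime q) (h : parList ps ≈ₐ parList qs) (hne : ps ++ qs ≠ []) :
    ∃ p ∈ ps, ∃ q ∈ qs, p ≈ₐ q := by
  obtain ⟨x, hx, hmax⟩ := Multiset.exists_max_image Proc.size
    (s := ((ps ++ qs : List Proc) : Multiset Proc)) (by simpa using hne)
  simp only [Multiset.mem_coe, List.mem_append] at hx hmax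
  have expose : ∀ {l : List Proc}, x ∈ l → parList l ≈ₐ .par x (parList (l.erase x)) :=
    fun hx => .of_sc (SC.parList_of_perm (List.perm_cons_erase hx))
  rcases hx with hx | hx
  · obtain ⟨q, hq, hxq⟩ := exists_mem_actBisim_of_size_max (hps x hx)
      (fun q hq => hmax q (.inr hq)) (fun r hr => .inl hr) ((expose hx).symm.trans h)
    exact ⟨x, hx, q, hq, hxq⟩
  · obtain ⟨p, hp, hxp⟩ := exists_mem_actBisim_of_size_max (hqs x hx)
      (fun p hp => hmax p (.inl hp)) (fun r hr => .inl hr) ((expose hx).symm.trans h.symm)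
    exact ⟨p, hp, x, hx, hxp.symm⟩

theorem rel_of_parList_actBisim {ps qs : List Proc} (hps : ∀ p ∈ ps, IsActPrime p)
    (hqs : ∀ q ∈ qs, IsActPrime q) (h : parList ps ≈ₐ parList qs) :
    Multiset.Rel (BisimOn false) ps qs := by
  classical
  obtain ⟨n, hn⟩ : ∃ n, ps.length = n := ⟨_, rfl⟩
  induction n generalizing ps qs with
  | zero =>
    obtain rfl := List.eq_nil_of_length_eq_zero hn
    by_cases hqs0 : qs = []
    · subst hqs0; exact .zero
    obtain ⟨p, hp, -⟩ := exists_actBisim_of_parList_actBisim hps hqs h (by simpa using hqs0)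
    simp at hp
  | succ n ih =>
    obtain ⟨p, hp, q, hq, hpq⟩ :=
      exists_actBisim_of_parList_actBisim hps hqs h (by simp [← List.length_pos_iff, hn])
    have hrest : parList (ps.erase p) ≈ₐ parList (qs.erase q) := by
      refine actBisim_par_left_cancel (R := p) ?_
      refine (BisimOn.of_sc (SC.parList_of_perm (List.perm_cons_erase hp))).symm.trans ?_
      refine h.trans ((BisimOn.of_sc (SC.parList_of_perm (List.perm_cons_erase hq))).trans ?_)
      exact hpq.symm.par (.refl _)
    have hrel := ih (fun r hr => hps r (List.mem_of_mem_erase hr))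
      (fun r hr => hqs r (List.mem_of_mem_erase hr)) hrest
      (by simp [List.length_erase_of_mem hp, hn])
    rw [← Multiset.cons_erase (Multiset.mem_coe.2 hp), Multiset.coe_erase,
      ← Multiset.cons_erase (Multiset.mem_coe.2 hq), Multiset.coe_erase]
    exact .cons hpq hrel

/-! ### Prefixes act-bisimilar to parallel compositions -/

theorem eq_and_actBisim_of_pre_actBisim_par {η a : Act} {P p R x : Proc}
    (h : .pre η P ≈ₐ .par p R) (hs : Step p (.act a) x) : a = η ∧ P ≈ₐ .par x R := by
  obtain ⟨Y, hY, hPY⟩ := h.symm.step Lab.matched_act (.parL R hs)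
  obtain ⟨he, rfl⟩ := hY.pre_inv
  exact ⟨Lab.act.inj he, hPY.symm⟩

theorem actBisim_pre_of_pre_actBisim_par {η a : Act} {P p R x : Proc}
    (h : .pre η P ≈ₐ .par p R) (hs : Step p (.act a) x) : p ≈ₐ .pre η x := by
  obtain ⟨rfl, hPx⟩ := eq_and_actBisim_of_pre_actBisim_par h hs
  refine actBisim_intro (fun b y hy => ?_) (fun b y hy => ?_)
  · obtain ⟨rfl, hPy⟩ := eq_and_actBisim_of_pre_actBisim_par h hy
    exact ⟨x, .pre _ x, actBisim_par_right_cancel (hPy.symm.trans hPx)⟩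
  · obtain ⟨he, rfl⟩ := hy.pre_inv
    obtain rfl := Lab.act.inj he
    exact ⟨y, hs, .refl y⟩

theorem pre_actBisim_of_par_pre_actBisim {η : Act} {x y : Proc}
    (h : .par x (.pre η y) ≈ₐ .par y (.pre η x)) (hx : IsActPrime (.pre η x))
    (hy : IsActPrime (.pre η y)) : .pre η x ≈ₐ .pre η y := by
  obtain ⟨xs, hxs, hx'⟩ := exists_isActPrime_parList x
  obtain ⟨ys, hys, hy'⟩ := exists_isActPrime_parList y
  have hswap : ∀ {u v : Proc}, .par u v ≈ₐ .par v u := .of_sc (.comm _ _)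
  have h' : parList (.pre η x :: ys) ≈ₐ parList (.pre η y :: xs) :=
    ((BisimOn.refl _).par hy'.symm).trans <| hswap.trans <| h.symm.trans <| hswap.trans <|
      (BisimOn.refl _).par hx'
  obtain ⟨b, hb, hxb⟩ := Multiset.exists_mem_of_rel_of_mem (rel_of_parList_actBisim
    (List.forall_mem_cons.2 ⟨hx, hys⟩) (List.forall_mem_cons.2 ⟨hy, hxs⟩) h')
    (Multiset.mem_coe.2 List.mem_cons_self)
  rcases List.mem_cons.1 (Multiset.mem_coe.1 hb) with rfl | hb
  · exact hxb
  · -- a factor of `x` is smaller than `η.x`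
    have hbx : b.size ≤ x.size := by
      rw [hx'.size_eq, Proc.size_parList]
      exact List.le_sum_of_mem (List.mem_map_of_mem hb)
    have := hxb.size_eq
    simp only [Proc.size] at this
    omega

theorem actBisim_of_pre_actBisim_par_par {η : Act} {P p q R : Proc}
    (h : .pre η P ≈ₐ .par p (.par q R)) (hp : IsActPrime p) (hq : IsActPrime q) : p ≈ₐ q := by
  have h' : .pre η P ≈ₐ .par q (.par p R) := h.trans (.of_sc (.par_left_comm _ _ _))
  obtain ⟨a, x, hx⟩ := Proc.exists_act_step hp.size_pos
  obtain ⟨b, y, hy⟩ := Proc.exists_act_step hq.size_pos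
  have hpx := actBisim_pre_of_pre_actBisim_par h hx
  have hqy := actBisim_pre_of_pre_actBisim_par h' hy
  have hxy : .par x q ≈ₐ .par y p := by
    refine actBisim_par_right_cancel (R := R) ?_
    refine (BisimOn.of_sc (.assoc _ _ _)).symm.trans ?_
    refine (eq_and_actBisim_of_pre_actBisim_par h hx).2.symm.trans ?_
    exact (eq_and_actBisim_of_pre_actBisim_par h' hy).2.trans (.of_sc (.assoc _ _ _))
  have hxy' : .par x (.pre η y) ≈ₐ .par y (.pre η x) :=
    ((BisimOn.refl x).par hqy.symm).trans (hxy.trans ((BisimOn.refl y).par hpx))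
  exact hpx.trans ((pre_actBisim_of_par_pre_actBisim hxy' (hp.of_actBisim hpx)
    (hq.of_actBisim hqy)).trans hqy.symm)

theorem exists_pow_of_pre_actBisim_par {η : Act} {P Q Q' : Proc} (h : .pre η P ≈ₐ .par Q Q')
    (hQ : ¬ Q ≈ₐ .nil) (hQ' : ¬ Q' ≈ₐ .nil) :
    ∃ A k, 2 ≤ k ∧ .pre η P ≈ₐ pow (.pre η A) k := by
  obtain ⟨lQ, hlQ, hQl⟩ := exists_isActPrime_parList Q
  obtain ⟨lQ', hlQ', hQl'⟩ := exists_isActPrime_parList Q'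
  obtain ⟨p, lQ, rfl⟩ :=
    List.exists_cons_of_ne_nil (l := lQ) fun hl => hQ (by simpa [hl, parList] using hQl)
  obtain ⟨p', lQ', rfl⟩ :=
    List.exists_cons_of_ne_nil (l := lQ') fun hl => hQ' (by simpa [hl, parList] using hQl')
  set l := lQ ++ p' :: lQ'
  have hprime : ∀ q ∈ p :: l, IsActPrime q := fun q hq =>
    (List.mem_append.1 (List.cons_append ▸ hq)).elim (hlQ q) (hlQ' q)
  have hl : .pre η P ≈ₐ parList (p :: l) :=
    h.trans ((hQl.par hQl').trans (.of_sc (SC.parList_append _ _).symm))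
  obtain ⟨a, x, hx⟩ := Proc.exists_act_step (hprime p List.mem_cons_self).size_pos
  have hpx : p ≈ₐ .pre η x := actBisim_pre_of_pre_actBisim_par hl hx
  have hall : ∀ q ∈ p :: l, q ≈ₐ .pre η x := by
    intro q hq
    rcases List.mem_cons.1 hq with rfl | hq
    · exact hpx
    have hpq := actBisim_of_pre_actBisim_par_par
      (hl.trans (.of_sc (.par (.refl p) (SC.parList_of_perm (List.perm_cons_erase hq)))))
      (hprime p List.mem_cons_self) (hprime q (List.mem_cons_of_mem p hq))
    exact hpq.symm.trans hpx
  have hlen : 1 ≤ l.length := by simp only [l, List.length_append, List.length_cons]; omega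
  exact ⟨x, l.length + 1, by omega, hl.trans (bisimOn_parList_pow hall)⟩

/-! ### Act-bisimilar normal forms are structurally congruent -/

theorem isActPrime_pre_of_nf {η : Act} {A : Proc} (hA : ∀ M, NF M → A ≈ₐ M → SC A M)
    (hnf : NF (.pre η A)) : IsActPrime (.pre η A) := by
  refine ⟨fun h => by simpa [Proc.size] using BisimOn.nil_iff.1 h, fun U V hUV => ?_⟩
  by_contra! hne
  obtain ⟨B, m, hm, hB⟩ := exists_pow_of_pre_actBisim_par hUV hne.1 hne.2
  obtain ⟨C, j, hj, hC, hAC⟩ := exists_nf_pow_of_bisimOn_pow hB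
  obtain ⟨X, hX, hAX⟩ := hAC.step Lab.matched_act (.pre η A)
  obtain ⟨k, hk, -, hX'⟩ := hX.pow_pre_inv
  have hsc := hA _ (hC.of_pre.par (hC.pow k)) (hAX.trans (.of_sc hX'))
  exact hnf ⟨_, .congr (.pre η hsc) (.head (k := k) (by nlinarith)) (.refl _)⟩

theorem sc_of_actBisim_of_nf {N M : Proc} (hN : NF N) (hM : NF M) (h : N ≈ₐ M) : SC N M := by
  obtain ⟨n, hn⟩ : ∃ n, N.size = n := ⟨_, rfl⟩
  induction n using Nat.strong_induction_on generalizing N M with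
  | _ n ih =>
  have body_lt : ∀ {X c : Proc} {η : Act} {A : Proc}, c ∈ X.comps → c = .pre η A →
      X.size ≤ n → A.size < n := fun hc hcA hX => by
    have := Proc.size_le_of_mem_comps hc
    simp only [hcA, Proc.size] at this
    omega
  have hprime : ∀ {X : Proc}, NF X → X.size ≤ n → ∀ c ∈ X.comps, IsActPrime c := by
    intro X hX hXn c hc
    obtain ⟨η, A, rfl⟩ := Proc.exists_eq_pre_of_mem_comps hc
    have hcnf := hX.of_mem_comps hc
    exact isActPrime_pre_of_nf
      (fun M hM hAM => ih _ (body_lt hc rfl hXn) hcnf.of_pre hM hAM rfl) hcnf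
  have hcomps : parList N.comps ≈ₐ parList M.comps :=
    (BisimOn.of_sc (SC.parList_comps N)).symm.trans (h.trans (.of_sc (SC.parList_comps M)))
  have hrel := rel_of_parList_actBisim (hprime hN hn.le) (hprime hM (h.size_eq ▸ hn.le)) hcomps
  refine (SC.parList_comps N).trans ((SC.parList_of_rel (hrel.mono fun c hc d hd hcd => ?_)).trans
    (SC.parList_comps M).symm)
  rw [Multiset.mem_coe] at hc hd
  obtain ⟨η, A, rfl⟩ := Proc.exists_eq_pre_of_mem_comps hc
  obtain ⟨η', B, rfl⟩ := Proc.exists_eq_pre_of_mem_comps hd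
  obtain ⟨rfl, hAB⟩ := hcd.pre_inv
  exact .pre η
    (ih _ (body_lt hc rfl hn.le) (hN.of_mem_comps hc).of_pre (hM.of_mem_comps hd).of_pre hAB rfl)

/-- if a prefixed process is bisimilar to a nontrivial parallel
    composition, then it is bisimilar to a power `(η.A)^k`, `k > 1`, with
    `η.A` in normal form. -/
theorem mixed_equation {η : Act} {P Q Q' : Proc}
    (h : Bisim (.pre η P) (.par Q Q'))
    (hQ : ¬ Bisim Q .nil) (hQ' : ¬ Bisim Q' .nil) :
    ∃ (A : Proc) (k : ℕ), 1 < k ∧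
      Bisim (.pre η P) (pow (.pre η A) k) ∧ NF (.pre η A) := by
  have nontrivial : ∀ {R : Proc}, ¬ Bisim R .nil → ¬ R ≈ₐ .nil := fun hR hR' =>
    hR (bisim_iff_bisimOn_true.2 (BisimOn.nil_iff.2 (BisimOn.nil_iff.1 hR')))
  obtain ⟨B, m, hm, hB⟩ :=
    exists_pow_of_pre_actBisim_par (bisim_iff_bisimOn_true.1 h).mono
      (nontrivial hQ) (nontrivial hQ')
  obtain ⟨A, j, hj, hA, hPA⟩ := exists_nf_pow_of_bisimOn_pow hB
  obtain ⟨N, hPN, hN⟩ := exists_rws_nf (.pre η P)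
  have hNA : SC N (pow (.pre η A) (j * m)) :=
    sc_of_actBisim_of_nf hN (hA.pow _) ((BisimOn.of_rws hPN).symm.trans hPA)
  refine ⟨A, j * m, by nlinarith, ?_, hA⟩
  exact bisim_iff_bisimOn_true.2 ((BisimOn.of_rws hPN).trans (.of_sc hNA))
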